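/- arXiv:cond-mat/9603068 — 4 statements merged into one kernel-verified Lean document; each statement's English description precedes it below -/
import Mathlib

section
/- Let ρ be a probability measure on a finite set E, and let f, g : E → ℝ with 0 ≤ f ≤ 1, 0 ≤ g ≤ 1, ρ(f) > 0, ρ(g) > 0. Define the weighted measures ρ^(f)(A) = ρ(f·1_A)/ρ(f) and ρ^(g)(A) = ρ(g·1_A)/ρ(g). Then sup over subsets A of E of |ρ^(f)(A) − ρ^(g)(A)| is at most max( ρ(1−f)/ρ(f), ρ(1−g)/ρ(g) ). -/
private lemma weighted_aux
    {E : Type*} [Fintype E] (ρ f g : E → ℝ)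
    (hρ0 : ∀ x, 0 ≤ ρ x) (hρ1 : ∑ x, ρ x = 1)
    (hf1 : ∀ x, f x ≤ 1)
    (hg0 : ∀ x, 0 ≤ g x) (hg1 : ∀ x, g x ≤ 1)
    (hfpos : 0 < ∑ x, f x * ρ x) (hgpos : 0 < ∑ x, g x * ρ x)
    (hGF : (∑ x, g x * ρ x) ≤ ∑ x, f x * ρ x) (A : Finset E) :
    (∑ x ∈ A, f x * ρ x) / (∑ x, f x * ρ x)
      - (∑ x ∈ A, g x * ρ x) / (∑ x, g x * ρ x)
      ≤ (1 - ∑ x, g x * ρ x) / (∑ x, g x * ρ x) := by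
  have hgA : 0 ≤ ∑ x ∈ A, g x * ρ x :=
    Finset.sum_nonneg fun x _ => mul_nonneg (hg0 x) (hρ0 x)
  have h1G : 0 ≤ 1 - ∑ x, g x * ρ x := by
    have : (∑ x, g x * ρ x) ≤ ∑ x, ρ x :=
      Finset.sum_le_sum fun x _ => by nlinarith [hg1 x, hρ0 x]
    linarith [this, hρ1.ge]
  have key : (∑ x ∈ A, f x * ρ x) - (∑ x ∈ A, g x * ρ x) ≤ 1 - ∑ x, g x * ρ x := by
    have h2 : ∑ x ∈ A, (f x * ρ x - g x * ρ x) ≤ ∑ x ∈ A, ((1 - g x) * ρ x) :=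
      Finset.sum_le_sum fun x _ => by nlinarith [hf1 x, hρ0 x]
    have h3 : ∑ x ∈ A, ((1 - g x) * ρ x) ≤ ∑ x, ((1 - g x) * ρ x) :=
      Finset.sum_le_sum_of_subset_of_nonneg (Finset.subset_univ A)
        (fun x _ _ => mul_nonneg (by linarith [hg1 x]) (hρ0 x))
    have h4 : ∑ x, ((1 - g x) * ρ x) = 1 - ∑ x, g x * ρ x := by
      simp [sub_mul, Finset.sum_sub_distrib, hρ1]
    rw [Finset.sum_sub_distrib] at h2
    linarith
  calc (∑ x ∈ A, f x * ρ x) / (∑ x, f x * ρ x)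
        - (∑ x ∈ A, g x * ρ x) / (∑ x, g x * ρ x)
      ≤ (∑ x ∈ A, f x * ρ x) / (∑ x, f x * ρ x)
        - (∑ x ∈ A, g x * ρ x) / (∑ x, f x * ρ x) := by gcongr
    _ = ((∑ x ∈ A, f x * ρ x) - (∑ x ∈ A, g x * ρ x)) / (∑ x, f x * ρ x) := by ring
    _ ≤ (1 - ∑ x, g x * ρ x) / (∑ x, f x * ρ x) := by gcongr
    _ ≤ (1 - ∑ x, g x * ρ x) / (∑ x, g x * ρ x) := by gcongr

/-- Lemma 3.1: if `ρ` is a probability measure on a finite set `E` and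
`0 ≤ f,g ≤ 1` with `ρ(f), ρ(g) > 0`, then the (half) variation distance between
the weighted measures `ρ^(f)` and `ρ^(g)` is at most
`max (ρ(1-f)/ρ(f)) (ρ(1-g)/ρ(g))`. -/
theorem weighted_measure_variation_bound
    {E : Type*} [Fintype E] (ρ f g : E → ℝ)
    (hρ0 : ∀ x, 0 ≤ ρ x) (hρ1 : ∑ x, ρ x = 1)
    (hf0 : ∀ x, 0 ≤ f x) (hf1 : ∀ x, f x ≤ 1)
    (hg0 : ∀ x, 0 ≤ g x) (hg1 : ∀ x, g x ≤ 1)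
    (hfpos : 0 < ∑ x, f x * ρ x) (hgpos : 0 < ∑ x, g x * ρ x) :
    (⨆ A : Finset E,
      |(∑ x ∈ A, f x * ρ x) / (∑ x, f x * ρ x)
        - (∑ x ∈ A, g x * ρ x) / (∑ x, g x * ρ x)|)
      ≤ max ((∑ x, (1 - f x) * ρ x) / (∑ x, f x * ρ x))
            ((∑ x, (1 - g x) * ρ x) / (∑ x, g x * ρ x)) := by
  have hF : ∑ x, ((1 - f x) * ρ x) = 1 - ∑ x, f x * ρ x := by
    simp [sub_mul, Finset.sum_sub_distrib, hρ1]
  have hG : ∑ x, ((1 - g x) * ρ x) = 1 - ∑ x, g x * ρ x := by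
    simp [sub_mul, Finset.sum_sub_distrib, hρ1]
  classical
  rw [hF, hG]
  apply ciSup_le
  intro A
  -- complement identity
  have compl_f : ∑ x ∈ Aᶜ, f x * ρ x = (∑ x, f x * ρ x) - ∑ x ∈ A, f x * ρ x := by
    have := Finset.sum_compl_add_sum A (fun x => f x * ρ x)
    linarith
  have compl_g : ∑ x ∈ Aᶜ, g x * ρ x = (∑ x, g x * ρ x) - ∑ x ∈ A, g x * ρ x := by
    have := Finset.sum_compl_add_sum A (fun x => g x * ρ x)
    linarith
  have flip : ∀ (u v : E → ℝ) (hu : 0 < ∑ x, u x * ρ x) (hv : 0 < ∑ x, v x * ρ x),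
      (∑ x ∈ A, v x * ρ x) / (∑ x, v x * ρ x)
        - (∑ x ∈ A, u x * ρ x) / (∑ x, u x * ρ x)
      = (∑ x ∈ Aᶜ, u x * ρ x) / (∑ x, u x * ρ x)
        - (∑ x ∈ Aᶜ, v x * ρ x) / (∑ x, v x * ρ x) := by
    intro u v hu hv
    have cu : ∑ x ∈ Aᶜ, u x * ρ x = (∑ x, u x * ρ x) - ∑ x ∈ A, u x * ρ x := by
      have := Finset.sum_compl_add_sum A (fun x => u x * ρ x)
      linarith
    have cv : ∑ x ∈ Aᶜ, v x * ρ x = (∑ x, v x * ρ x) - ∑ x ∈ A, v x * ρ x := by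
      have := Finset.sum_compl_add_sum A (fun x => v x * ρ x)
      linarith
    rw [cu, cv]
    field_simp
    ring
  rcases le_total (∑ x, g x * ρ x) (∑ x, f x * ρ x) with hle | hle
  · refine le_trans ?_ (le_max_right _ _)
    rw [abs_sub_le_iff]
    constructor
    · exact weighted_aux ρ f g hρ0 hρ1 hf1 hg0 hg1 hfpos hgpos hle A
    · rw [flip f g hfpos hgpos]
      exact weighted_aux ρ f g hρ0 hρ1 hf1 hg0 hg1 hfpos hgpos hle Aᶜ
  · refine le_trans ?_ (le_max_left _ _)
    rw [abs_sub_le_iff]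
    constructor
    · rw [flip g f hgpos hfpos]
      exact weighted_aux ρ g f hρ0 hρ1 hg1 hf0 hf1 hgpos hfpos hle Aᶜ
    · exact weighted_aux ρ g f hρ0 hρ1 hg1 hf0 hf1 hgpos hfpos hle A
end

section
/- Let ρ be a probability measure on a finite set E such that ρ({x}) ≤ 1/(m) for every x ∈ E, where m ≥ 2 is an integer. Let f, g : E → [0,1] each differ from the constant function 1 on at most one point of E, and suppose ρ(f), ρ(g) ≥ 1 − 1/m > 0. Then sup_{A⊆E} |ρ^(f)(A) − ρ^(g)(A)| ≤ 1/(m−1), where ρ^(h)(A) = ρ(h·1_A)/ρ(h). -/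
set_option maxHeartbeats 1000000

theorem aux_sum_defect {E : Type*} [DecidableEq E] (ρ h : E → ℝ) (z : E)
    (hz : ∀ x, x ≠ z → h x = 1) (A : Finset E) :
    ∑ x ∈ A, h x * ρ x = (∑ x ∈ A, ρ x) - (if z ∈ A then (1 - h z) * ρ z else 0) := by
  have e : ∀ x ∈ A, h x * ρ x = ρ x - (if x = z then (1 - h z) * ρ z else 0) := by
    intro x hx
    by_cases hxz : x = z
    · subst hxz; simp; ring
    · rw [hz x hxz]; simp [hxz]
  rw [Finset.sum_congr rfl e, Finset.sum_sub_distrib, Finset.sum_ite_eq' A z]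

/-- If `ρ` is a probability measure on a finite set `E` whose point masses are
at most `1/m` (`m ≥ 2` an integer), and `f, g : E → [0,1]` each differ from the
constant `1` on at most one point, with `ρ(f), ρ(g) ≥ 1 - 1/m > 0`, then the
(half) variation distance between `ρ^(f)` and `ρ^(g)` is at most `1/(m-1)`. -/
theorem weighted_measure_variation_bound_single_defect
    {E : Type*} [Fintype E] (m : ℕ) (hm : 2 ≤ m) (ρ f g : E → ℝ)
    (hρ0 : ∀ x, 0 ≤ ρ x) (hρ1 : ∑ x, ρ x = 1)
    (hρm : ∀ x, ρ x ≤ 1 / (m : ℝ))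
    (hf0 : ∀ x, 0 ≤ f x) (hf1 : ∀ x, f x ≤ 1)
    (hg0 : ∀ x, 0 ≤ g x) (hg1 : ∀ x, g x ≤ 1)
    (hfdef : ∃ x₀, ∀ x, x ≠ x₀ → f x = 1)
    (hgdef : ∃ y₀, ∀ x, x ≠ y₀ → g x = 1)
    (hfpos : 1 - 1 / (m : ℝ) ≤ ∑ x, f x * ρ x)
    (hgpos : 1 - 1 / (m : ℝ) ≤ ∑ x, g x * ρ x) :
    (⨆ A : Finset E,
      |(∑ x ∈ A, f x * ρ x) / (∑ x, f x * ρ x)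
        - (∑ x ∈ A, g x * ρ x) / (∑ x, g x * ρ x)|)
      ≤ 1 / ((m : ℝ) - 1) := by
  classical
  obtain ⟨x₀, hx₀⟩ := hfdef
  obtain ⟨y₀, hy₀⟩ := hgdef
  have hm' : (2:ℝ) ≤ (m:ℝ) := by exact_mod_cast hm
  have hmpos : (0:ℝ) < (m:ℝ) := by linarith
  have hm1pos : (0:ℝ) < (m:ℝ) - 1 := by linarith
  set a : ℝ := (1 - f x₀) * ρ x₀ with ha_def
  set b : ℝ := (1 - g y₀) * ρ y₀ with hb_def
  have hF : ∑ x, f x * ρ x = 1 - a := by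
    rw [aux_sum_defect ρ f x₀ hx₀ Finset.univ, hρ1, if_pos (Finset.mem_univ x₀)]
  have hG : ∑ x, g x * ρ x = 1 - b := by
    rw [aux_sum_defect ρ g y₀ hy₀ Finset.univ, hρ1, if_pos (Finset.mem_univ y₀)]
  have ha0 : 0 ≤ a := mul_nonneg (by linarith [hf1 x₀]) (hρ0 x₀)
  have hb0 : 0 ≤ b := mul_nonneg (by linarith [hg1 y₀]) (hρ0 y₀)
  have haρ : a ≤ ρ x₀ := by
    have := hρ0 x₀; have := hf0 x₀; nlinarith
  have hbρ : b ≤ ρ y₀ := by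
    have := hρ0 y₀; have := hg0 y₀; nlinarith
  have ham : a * m ≤ 1 := by
    rw [hF] at hfpos
    have ha : a ≤ 1 / (m:ℝ) := by linarith
    exact (le_div_iff₀ hmpos).mp ha
  have hbm : b * m ≤ 1 := by
    rw [hG] at hgpos
    have hb : b ≤ 1 / (m:ℝ) := by linarith
    exact (le_div_iff₀ hmpos).mp hb
  have h1a : (0:ℝ) < 1 - a := by nlinarith
  have h1b : (0:ℝ) < 1 - b := by nlinarith
  apply ciSup_le
  intro A
  rw [aux_sum_defect ρ f x₀ hx₀ A, aux_sum_defect ρ g y₀ hy₀ A, hF, hG]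
  set P : ℝ := ∑ x ∈ A, ρ x with hP_def
  have hP0 : 0 ≤ P := Finset.sum_nonneg fun x _ => hρ0 x
  have hP1 : P ≤ 1 := by
    rw [← hρ1]
    exact Finset.sum_le_sum_of_subset_of_nonneg (Finset.subset_univ A)
      (fun x _ _ => hρ0 x)
  have hmemx : ∀ z : E, z ∈ A → ρ z ≤ P := fun z hz =>
    Finset.single_le_sum (fun x _ => hρ0 x) hz
  have hnmemx : ∀ z : E, z ∉ A → P ≤ 1 - ρ z := by
    intro z hz
    have h1 : ρ z + P = ∑ x ∈ insert z A, ρ x := (Finset.sum_insert hz).symm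
    have h2 : ∑ x ∈ insert z A, ρ x ≤ 1 := by
      rw [← hρ1]
      exact Finset.sum_le_sum_of_subset_of_nonneg (Finset.subset_univ _)
        (fun x _ _ => hρ0 x)
    linarith
  have key : ∀ X Y : ℝ, |X * (1 - b) - (1 - a) * Y| * ((m:ℝ) - 1) ≤ 1 * ((1 - a) * (1 - b)) →
      |X / (1 - a) - Y / (1 - b)| ≤ 1 / ((m:ℝ) - 1) := by
    intro X Y hXY
    rw [div_sub_div _ _ (ne_of_gt h1a) (ne_of_gt h1b), abs_div,
      abs_of_pos (mul_pos h1a h1b), div_le_div_iff₀ (mul_pos h1a h1b) hm1pos]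
    exact hXY
  by_cases hxA : x₀ ∈ A <;> by_cases hyA : y₀ ∈ A
  · rw [if_pos hxA, if_pos hyA]
    apply key
    have hPa : a ≤ P := le_trans haρ (hmemx x₀ hxA)
    have hPb : b ≤ P := le_trans hbρ (hmemx y₀ hyA)
    rcases abs_cases ((P - a) * (1-b) - (1-a) * (P - b)) with ⟨h1, h2⟩ | ⟨h1, h2⟩ <;>
      rw [h1] <;> nlinarith [mul_nonneg ha0 hb0]
  · rw [if_pos hxA, if_neg hyA, sub_zero]
    apply key
    have hPa : a ≤ P := le_trans haρ (hmemx x₀ hxA)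
    have hPb : P ≤ 1 - b := le_trans (hnmemx y₀ hyA) (by linarith)
    rcases abs_cases ((P - a) * (1-b) - (1-a) * P) with ⟨h1, h2⟩ | ⟨h1, h2⟩ <;>
      rw [h1] <;>
      nlinarith [mul_nonneg (sub_nonneg.2 hPa) (sub_nonneg.2 hPb),
        mul_nonneg ha0 hb0, mul_nonneg (sub_nonneg.2 hPa) hb0,
        mul_nonneg (sub_nonneg.2 hPb) ha0, mul_nonneg (sub_nonneg.2 ham) hb0,
        mul_nonneg (sub_nonneg.2 hbm) ha0]
  · rw [if_neg hxA, if_pos hyA, sub_zero]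
    apply key
    have hPb : b ≤ P := le_trans hbρ (hmemx y₀ hyA)
    have hPa : P ≤ 1 - a := le_trans (hnmemx x₀ hxA) (by linarith)
    rcases abs_cases (P * (1-b) - (1-a) * (P - b)) with ⟨h1, h2⟩ | ⟨h1, h2⟩ <;>
      rw [h1] <;>
      nlinarith [mul_nonneg (sub_nonneg.2 hPb) (sub_nonneg.2 hPa),
        mul_nonneg ha0 hb0, mul_nonneg (sub_nonneg.2 hPb) ha0,
        mul_nonneg (sub_nonneg.2 hPa) hb0, mul_nonneg (sub_nonneg.2 hbm) ha0,
        mul_nonneg (sub_nonneg.2 ham) hb0]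
  · rw [if_neg hxA, if_neg hyA, sub_zero]
    apply key
    have hPa : P ≤ 1 - a := le_trans (hnmemx x₀ hxA) (by linarith)
    have hPb : P ≤ 1 - b := le_trans (hnmemx y₀ hyA) (by linarith)
    rcases abs_cases (P * (1-b) - (1-a) * P) with ⟨h1, h2⟩ | ⟨h1, h2⟩ <;>
      rw [h1] <;>
      nlinarith [mul_nonneg hP0 ha0, mul_nonneg hP0 hb0, mul_nonneg ha0 hb0]
end

section
/- For every integer q ≥ 7, one has 4·(q−3)²(2q−7)/(q⁵ − 16q⁴ + 108q³ − 391q² + 764q − 639) + 4·(q−3)³/(q⁵ − 16q⁴ + 108q³ − 389q² + 749q − 611) < 1, and both denominators are positive; for q = 6 the same expression is strictly greater than 1. -/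
/-- Square lattice, single-site decimation: for every integer `q ≥ 7` the
Dobrushin constant `α = 4c_nn + 4c_nnn < 1` (with positive denominators),
while for `q = 6` the same expression exceeds `1`. -/
theorem square_lattice_alpha_lt_one :
    (∀ q : ℤ, 7 ≤ q →
      0 < (q : ℝ) ^ 5 - 16 * q ^ 4 + 108 * q ^ 3 - 391 * q ^ 2 + 764 * q - 639 ∧
      0 < (q : ℝ) ^ 5 - 16 * q ^ 4 + 108 * q ^ 3 - 389 * q ^ 2 + 749 * q - 611 ∧
      4 * ((q : ℝ) - 3) ^ 2 * (2 * q - 7)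
          / ((q : ℝ) ^ 5 - 16 * q ^ 4 + 108 * q ^ 3 - 391 * q ^ 2 + 764 * q - 639)
        + 4 * ((q : ℝ) - 3) ^ 3
          / ((q : ℝ) ^ 5 - 16 * q ^ 4 + 108 * q ^ 3 - 389 * q ^ 2 + 749 * q - 611)
        < 1) ∧
    1 < 4 * ((6 : ℝ) - 3) ^ 2 * (2 * 6 - 7)
          / ((6 : ℝ) ^ 5 - 16 * 6 ^ 4 + 108 * 6 ^ 3 - 391 * 6 ^ 2 + 764 * 6 - 639)
        + 4 * ((6 : ℝ) - 3) ^ 3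
          / ((6 : ℝ) ^ 5 - 16 * 6 ^ 4 + 108 * 6 ^ 3 - 389 * 6 ^ 2 + 749 * 6 - 611) := by
  constructor
  · intro q hq
    have hq' : (7 : ℝ) ≤ (q : ℝ) := by exact_mod_cast hq
    set r : ℝ := (q : ℝ)
    have hx : 0 ≤ r - 7 := by linarith
    have hD1 : 0 < r ^ 5 - 16 * r ^ 4 + 108 * r ^ 3 - 391 * r ^ 2 + 764 * r - 639 := by
      nlinarith [pow_nonneg hx 2, pow_nonneg hx 3, pow_nonneg hx 4, pow_nonneg hx 5]
    have hD2 : 0 < r ^ 5 - 16 * r ^ 4 + 108 * r ^ 3 - 389 * r ^ 2 + 749 * r - 611 := by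
      nlinarith [pow_nonneg hx 2, pow_nonneg hx 3, pow_nonneg hx 4, pow_nonneg hx 5]
    refine ⟨hD1, hD2, ?_⟩
    rw [div_add_div _ _ (ne_of_gt hD1) (ne_of_gt hD2), div_lt_one (mul_pos hD1 hD2)]
    nlinarith [pow_nonneg hx 2, pow_nonneg hx 3, pow_nonneg hx 4, pow_nonneg hx 5,
      pow_nonneg hx 6, pow_nonneg hx 7, pow_nonneg hx 8, pow_nonneg hx 9, pow_nonneg hx 10]
  · norm_num
end

section
/- Let E be a finite set of size q, let S ⊆ E with |S| = m ≥ 2, and let ρ_t and ρ_{t'} be the uniform distributions on S \ {t} and S \ {t'} respectively, where t, t' ∈ E (uniform on S itself if t ∉ S, resp. t' ∉ S). Then sup_{A⊆E} |ρ_t(A) − ρ_{t'}(A)| ≤ 1/(m−1), with equality when t ≠ t' and both t, t' ∈ S. -/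
private lemma aux_div (x y c d e : ℝ) (hc : 0 < c) (hd : 0 < d) (he : 0 < e)
    (h1 : (x * d - y * c) * e ≤ c * d) (h2 : -(c * d) ≤ (x * d - y * c) * e) :
    |x / c - y / d| ≤ 1 / e := by
  have hcd : 0 < c * d := mul_pos hc hd
  rw [div_sub_div _ _ hc.ne' hd.ne', abs_div, abs_of_pos hcd,
    div_le_div_iff₀ hcd he, one_mul]
  have h3 : x * d - c * y = x * d - y * c := by ring
  rw [h3]
  calc |x * d - y * c| * e = |(x * d - y * c) * e| := by rw [abs_mul, abs_of_pos he]
    _ ≤ c * d := abs_le.mpr ⟨h2, h1⟩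

set_option maxHeartbeats 1000000 in
/-- Sharpness of the zero-temperature Dobrushin bound: if `ρ_t` and `ρ_{t'}`
are the uniform distributions on `S \ {t}` and `S \ {t'}` (with `|S| = m ≥ 2`),
then the half variation distance is at most `1/(m-1)`, with equality attained
when `t ≠ t'` and both `t, t' ∈ S`. -/
theorem uniform_erase_variation_bound
    {E : Type*} [Fintype E] [DecidableEq E] (q m : ℕ) (hE : Fintype.card E = q)
    (S : Finset E) (hS : S.card = m) (hm : 2 ≤ m) (t t' : E) :
    (∀ A : Finset E,
      |((A ∩ S.erase t).card : ℝ) / ((S.erase t).card : ℝ)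
        - ((A ∩ S.erase t').card : ℝ) / ((S.erase t').card : ℝ)|
        ≤ 1 / ((m : ℝ) - 1)) ∧
    (t ≠ t' → t ∈ S → t' ∈ S →
      ∃ A : Finset E,
        |((A ∩ S.erase t).card : ℝ) / ((S.erase t).card : ℝ)
          - ((A ∩ S.erase t').card : ℝ) / ((S.erase t').card : ℝ)|
          = 1 / ((m : ℝ) - 1)) := by
  have hm2 : (2:ℝ) ≤ (m:ℝ) := by exact_mod_cast hm
  have hm1 : (1:ℝ) ≤ (m:ℝ) - 1 := by linarith
  have hmpos : (0:ℝ) < (m:ℝ) - 1 := by linarith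
  have hmpos' : (0:ℝ) < (m:ℝ) := by linarith
  have hcerase : ∀ u : E, u ∈ S → ((S.erase u).card : ℝ) = (m:ℝ) - 1 := by
    intro u hu
    rw [Finset.card_erase_of_mem hu, hS]
    have : (1:ℕ) ≤ m := by omega
    push_cast [Nat.cast_sub this]
    ring
  constructor
  · intro A
    have key : ∀ u v : E, ((A ∩ S.erase u).card : ℝ) ≤ ((A ∩ S.erase v).card : ℝ) + 1 := by
      intro u v
      have hsub : A ∩ S.erase u ⊆ insert v (A ∩ S.erase v) := by
        intro x hx
        simp only [Finset.mem_inter, Finset.mem_erase, Finset.mem_insert] at *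
        tauto
      have := (Finset.card_le_card hsub).trans (Finset.card_insert_le _ _)
      exact_mod_cast this
    have hbound : ∀ u : E, ((A ∩ S.erase u).card : ℝ) ≤ ((S.erase u).card : ℝ) := by
      intro u
      exact_mod_cast Finset.card_le_card (Finset.inter_subset_right)
    have hmono : ∀ u : E, ((A ∩ S.erase u).card : ℝ) ≤ ((A ∩ S).card : ℝ) := by
      intro u
      exact_mod_cast Finset.card_le_card
        (Finset.inter_subset_inter (le_refl _) (Finset.erase_subset _ _))
    have hcardS : ((A ∩ S).card : ℝ) ≤ (m:ℝ) := by
      have h := Finset.card_le_card ((Finset.inter_subset_right : A ∩ S ⊆ S))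
      rw [hS] at h
      exact_mod_cast h
    by_cases ht : t ∈ S <;> by_cases ht' : t' ∈ S
    · -- both in S
      by_cases htt : t = t'
      · subst htt
        simp only [sub_self, abs_zero]
        positivity
      · set a := ((A ∩ S.erase t).card : ℝ) with ha
        set b := ((A ∩ S.erase t').card : ℝ) with hb
        have hab : a ≤ b + 1 := key t t'
        have hba : b ≤ a + 1 := key t' t
        rw [hcerase t ht, hcerase t' ht']
        apply aux_div _ _ _ _ _ hmpos hmpos hmpos
        · have step : a * ((m:ℝ)-1) - b * ((m:ℝ)-1) ≤ (m:ℝ)-1 := by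
            nlinarith [mul_nonneg (sub_nonneg.2 hab) hmpos.le]
          nlinarith [mul_le_mul_of_nonneg_right step hmpos.le]
        · have step : -((m:ℝ)-1) ≤ a * ((m:ℝ)-1) - b * ((m:ℝ)-1) := by
            nlinarith [mul_nonneg (sub_nonneg.2 hba) hmpos.le]
          nlinarith [mul_le_mul_of_nonneg_right step hmpos.le]
    · -- t ∈ S, t' ∉ S
      rw [Finset.erase_eq_of_notMem ht']
      set a := ((A ∩ S.erase t).card : ℝ) with ha
      set b := ((A ∩ S).card : ℝ) with hb
      have ha0 : 0 ≤ a := by positivity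
      have hb0 : 0 ≤ b := by positivity
      have hab : a ≤ b := hmono t
      have hba : b ≤ a + 1 := by
        have h := key t' t
        rwa [Finset.erase_eq_of_notMem ht'] at h
      have haM : a ≤ (m:ℝ) - 1 := by rw [ha, ← hcerase t ht]; exact hbound t
      rw [hcerase t ht, hS]
      apply aux_div _ _ _ _ _ hmpos hmpos' hmpos
      · have step : a * (m:ℝ) - b * ((m:ℝ)-1) ≤ (m:ℝ)-1 := by
          nlinarith [mul_nonneg (sub_nonneg.2 hab) hmpos.le]
        nlinarith [mul_le_mul_of_nonneg_right step hmpos.le]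
      · have step : -((m:ℝ)-1) ≤ a * (m:ℝ) - b * ((m:ℝ)-1) := by
          nlinarith [mul_nonneg (sub_nonneg.2 hba) hmpos.le]
        nlinarith [mul_le_mul_of_nonneg_right step hmpos.le]
    · -- t ∉ S, t' ∈ S
      rw [Finset.erase_eq_of_notMem ht]
      set a := ((A ∩ S).card : ℝ) with ha
      set b := ((A ∩ S.erase t').card : ℝ) with hb
      have ha0 : 0 ≤ a := by positivity
      have hb0 : 0 ≤ b := by positivity
      have hab : b ≤ a := hmono t'
      have hba : a ≤ b + 1 := by
        have h := key t t'
        rwa [Finset.erase_eq_of_notMem ht] at h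
      have hbM : b ≤ (m:ℝ) - 1 := by rw [hb, ← hcerase t' ht']; exact hbound t'
      rw [hcerase t' ht', hS]
      apply aux_div _ _ _ _ _ hmpos' hmpos hmpos
      · have step : a * ((m:ℝ)-1) - b * (m:ℝ) ≤ (m:ℝ)-1 := by
          nlinarith [mul_nonneg (sub_nonneg.2 hba) hmpos.le]
        nlinarith [mul_le_mul_of_nonneg_right step hmpos.le]
      · have step : -((m:ℝ)-1) ≤ a * ((m:ℝ)-1) - b * (m:ℝ) := by
          nlinarith [mul_nonneg (sub_nonneg.2 hab) hmpos.le]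
        nlinarith [mul_le_mul_of_nonneg_right step hmpos.le]
    · -- neither in S
      rw [Finset.erase_eq_of_notMem ht, Finset.erase_eq_of_notMem ht']
      simp only [sub_self, abs_zero]
      positivity
  · intro htt ht ht'
    refine ⟨{t'}, ?_⟩
    have h1 : ({t'} : Finset E) ∩ S.erase t = {t'} := by
      rw [Finset.inter_eq_left]
      simp [Finset.mem_erase, Ne.symm htt, ht']
    have h2 : ({t'} : Finset E) ∩ S.erase t' = ∅ := by
      ext x
      simp only [Finset.mem_inter, Finset.mem_singleton, Finset.mem_erase,
        Finset.notMem_empty, iff_false]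
      rintro ⟨rfl, h, _⟩
      exact h rfl
    rw [h1, h2, hcerase t ht, hcerase t' ht']
    simp only [Finset.card_singleton, Finset.card_empty, Nat.cast_one, Nat.cast_zero]
    rw [zero_div, sub_zero, abs_of_pos (by positivity)]
end
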